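/- arXiv:1909.10098 — 2 statements merged into one kernel-verified Lean document; each statement's English description precedes it below -/
import Mathlib

section
/- Let r be a rational number with 0 ≤ r ≤ 1, let m be a positive integer, and let n be a positive integer such that n·r is an integer. Set t = 1 - r/m. Then ⌊(n+1)·t⌋ - n·t ≥ 0. -/
theorem stmt_0 (r : ℚ) (hr0 : 0 ≤ r) (hr1 : r ≤ 1) (m n : ℕ) (hm : 0 < m) (hn : 0 < n)
    (hnr : ∃ k : ℤ, (n : ℚ) * r = k) :
    (0 : ℚ) ≤ (⌊((n : ℚ) + 1) * (1 - r / m)⌋ : ℚ) - (n : ℚ) * (1 - r / m) := by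
  obtain ⟨k, hk⟩ := hnr
  have hm' : (0:ℚ) < m := by exact_mod_cast hm
  set q : ℤ := k / (m:ℤ) with hq
  have e1 : (k:ℚ) = (m:ℚ) * (q:ℚ) + ((k % (m:ℤ) : ℤ) : ℚ) := by
    exact_mod_cast congrArg (Int.cast : ℤ → ℚ) (Int.mul_ediv_add_emod k m).symm
  have hmz : (0:ℤ) < (m:ℤ) := by exact_mod_cast hm
  have h2 : (0:ℚ) ≤ ((k % (m:ℤ) : ℤ) : ℚ) := by
    exact_mod_cast Int.emod_nonneg k (ne_of_gt hmz)
  have h3 : ((k % (m:ℤ) : ℤ) : ℚ) ≤ (m:ℚ) - 1 := by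
    have := Int.emod_lt_of_pos k hmz
    have : k % (m:ℤ) ≤ (m:ℤ) - 1 := by omega
    exact_mod_cast this
  have hrm : r / (m:ℚ) * (m:ℚ) = r := div_mul_cancel₀ r (ne_of_gt hm')
  have key : ((n:ℚ) - (q:ℚ)) ≤ ((n : ℚ) + 1) * (1 - r / m) := by
    rw [← sub_nonneg]
    have expand : ((n : ℚ) + 1) * (1 - r / m) - ((n:ℚ) - (q:ℚ))
        = 1 + (q:ℚ) - ((n:ℚ) * r + r) / m := by
      field_simp
      ring
    rw [expand, sub_nonneg, div_le_iff₀ hm', hk]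
    nlinarith [e1, h2, h3, hr1]
  have kf : ((n:ℤ) - q : ℤ) ≤ ⌊((n : ℚ) + 1) * (1 - r / m)⌋ := by
    rw [Int.le_floor]
    push_cast
    exact key
  have kf' : ((n:ℚ) - (q:ℚ)) ≤ (⌊((n : ℚ) + 1) * (1 - r / m)⌋ : ℚ) := by
    exact_mod_cast kf
  have last : (n : ℚ) * (1 - r / m) ≤ (n:ℚ) - (q:ℚ) := by
    have : (n : ℚ) * (1 - r / m) = (n:ℚ) - (n:ℚ) * r / m := by ring
    rw [this, hk, sub_le_sub_iff_left, le_div_iff₀ hm']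
    nlinarith [e1, h2]
  linarith
end

section
/- Let (aᵢ) and (bᵢ) be strictly increasing sequences of rational numbers with aᵢ → 1/√2 and bᵢ → 1 - 1/√2, and aᵢ < 1/√2, bᵢ < 1 - 1/√2 for all i. Then for every positive integer n there exists an index i such that ⌈n·aᵢ⌉/n + ⌈n·bᵢ⌉/n > 1. -/
/-!
Write `s = n/√2` and `t = n - s`. Since `s` is irrational, `⌈s⌉ - 1 < s < ⌈s⌉`, so once `n aᵢ`
and `n bᵢ` are close enough to `s` and `t`, we get `⌈n aᵢ⌉ ≥ ⌈s⌉` and `⌈n bᵢ⌉ ≥ n - ⌈s⌉ + 1`.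
-/

open Filter Topology

theorem eventually_le_ceil_of_tendsto {ι : Type*} {l : Filter ι} {u : ι → ℝ} {s : ℝ}
    (hu : Tendsto u l (𝓝 s)) {k : ℤ} (hk : (k : ℝ) - 1 < s) : ∀ᶠ i in l, k ≤ ⌈u i⌉ :=
  (hu.eventually (lt_mem_nhds hk)).mono fun _ hi => Int.le_ceil_iff.mpr hi

theorem eventually_add_one_le_ceil_add_ceil {ι : Type*} {l : Filter ι} {u v : ι → ℝ}
    {s t : ℝ} {m : ℤ} (hu : Tendsto u l (𝓝 s)) (hv : Tendsto v l (𝓝 t)) (hst : s + t = m)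
    (hs : ∀ k : ℤ, s ≠ k) : ∀ᶠ i in l, m + 1 ≤ ⌈u i⌉ + ⌈v i⌉ := by
  have hs_lt : s < ⌈s⌉ := (Int.le_ceil s).lt_of_ne (hs _)
  have hu' := eventually_le_ceil_of_tendsto hu (k := ⌈s⌉) (by linarith [Int.ceil_lt_add_one s])
  have hv' := eventually_le_ceil_of_tendsto hv (k := m - ⌈s⌉ + 1) (by push_cast; linarith)
  filter_upwards [hu', hv'] with i hui hvi
  omega

theorem stmt_17_general (a b : ℕ → ℚ)
    (halim : Filter.Tendsto (fun i => (a i : ℝ)) Filter.atTop (nhds (1 / Real.sqrt 2)))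
    (hblim : Filter.Tendsto (fun i => (b i : ℝ)) Filter.atTop (nhds (1 - 1 / Real.sqrt 2)))
    (n : ℕ) (hn : 0 < n) :
    ∃ i, (⌈(n : ℚ) * a i⌉ : ℚ) / n + (⌈(n : ℚ) * b i⌉ : ℚ) / n > 1 := by
  have hu : Tendsto (fun i => (((n : ℚ) * a i : ℚ) : ℝ)) atTop (𝓝 (n * (1 / √2))) := by
    push_cast; exact halim.const_mul _
  have hv : Tendsto (fun i => (((n : ℚ) * b i : ℚ) : ℝ)) atTop (𝓝 (n * (1 - 1 / √2))) := by
    push_cast; exact hblim.const_mul _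
  have hs : Irrational (n * (1 / √2)) := by
    rw [one_div]; exact irrational_sqrt_two.inv.natCast_mul hn.ne'
  obtain ⟨i, hi⟩ := (eventually_add_one_le_ceil_add_ceil hu hv (m := n) (by push_cast; ring)
    hs.ne_int).exists
  simp only [Rat.ceil_cast] at hi
  refine ⟨i, ?_⟩
  rw [← add_div, gt_iff_lt, one_lt_div (by exact_mod_cast hn)]
  exact_mod_cast Int.lt_of_add_one_le hi

theorem stmt_17 (a b : ℕ → ℚ) (ha : StrictMono a) (hb : StrictMono b)
    (haub : ∀ i, (a i : ℝ) < 1 / Real.sqrt 2)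
    (hbub : ∀ i, (b i : ℝ) < 1 - 1 / Real.sqrt 2)
    (halim : Filter.Tendsto (fun i => (a i : ℝ)) Filter.atTop (nhds (1 / Real.sqrt 2)))
    (hblim : Filter.Tendsto (fun i => (b i : ℝ)) Filter.atTop (nhds (1 - 1 / Real.sqrt 2)))
    (n : ℕ) (hn : 0 < n) :
    ∃ i, (⌈(n : ℚ) * a i⌉ : ℚ) / n + (⌈(n : ℚ) * b i⌉ : ℚ) / n > 1 :=
  stmt_17_general a b halim hblim n hn
end
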